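/- Let X be a real normed space, K a real Banach space with continuous dual K*, and let A : X → L(K, K*) be Gâteaux differentiable with derivative A' : X → L(X, L(K,K*)). Assume: each A(ζ) is boundedly invertible with ‖A(ζ)^{-1}‖ ≤ 1/α for a uniform α > 0; ‖A'(ζ)‖ ≤ M_{A'} for all ζ ∈ X; and A' is Lipschitz: ‖A'(ξ₁) − A'(ξ₂)‖ ≤ L_A ‖ξ₁ − ξ₂‖_X. Fix f ∈ K* and define R'(ζ) ∈ L(X, K) by R'(ζ)η := − A(ζ)^{-1} (A'(ζ)η) A(ζ)^{-1} f. Then the map ζ ↦ R'(ζ) is Lipschitz continuous from X to L(X, K); in fact ‖R'(ξ₁) − R'(ξ₂)‖_{L(X,K)} ≤ ‖f‖_{K*} ( L_A/α² + 2 M_{A'}²/α³ ) ‖ξ₁ − ξ₂‖_X for all ξ₁, ξ₂ ∈ X. -/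

import Mathlib

/-! The resolvent identity `A(ξ₁)⁻¹ - A(ξ₂)⁻¹ = A(ξ₁)⁻¹ (A(ξ₂) - A(ξ₁)) A(ξ₂)⁻¹`, together with
the mean value inequality for `A`, makes `ζ ↦ A(ζ)⁻¹` Lipschitz with constant `M_{A'}/α²`.
Telescoping `R'(ξ₁)η - R'(ξ₂)η` into three differences, in each of which only one of the factors
`A(ζ)⁻¹`, `A'(ζ)η`, `A(ζ)⁻¹ f` changes, produces the terms `M_{A'}²/α³`, `L_A/α²`, `M_{A'}²/α³`. -/

open Topology Filter

noncomputable section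

variable {X K : Type*} [NormedAddCommGroup X] [NormedSpace ℝ X]
  [NormedAddCommGroup K] [NormedSpace ℝ K]

/-- Shortcut instance, helping Lean synthesize the operator norm on nested spaces of
continuous linear maps. -/
instance : SeminormedAddCommGroup (K →L[ℝ] (K →L[ℝ] ℝ)) := inferInstance

instance : NormedSpace ℝ (K →L[ℝ] (K →L[ℝ] ℝ)) := inferInstance

def HasGateauxDeriv {E F : Type*} [NormedAddCommGroup E] [NormedSpace ℝ E]
    [NormedAddCommGroup F] [NormedSpace ℝ F] (f : E → F) (f' : E → E →L[ℝ] F) : Prop :=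
  ∀ x v : E, Tendsto (fun t : ℝ => t⁻¹ • (f (x + t • v) - f x)) (𝓝[≠] (0 : ℝ)) (𝓝 (f' x v))

namespace HasGateauxDeriv

variable {E F : Type*} [NormedAddCommGroup E] [NormedSpace ℝ E]
  [NormedAddCommGroup F] [NormedSpace ℝ F] {f : E → F} {f' : E → E →L[ℝ] F}

theorem hasDerivAt_add_smul (hf : HasGateauxDeriv f f') (x v : E) (s : ℝ) :
    HasDerivAt (fun t : ℝ => f (x + t • v)) (f' (x + s • v) v) s := by
  have at_zero : HasDerivAt (fun t : ℝ => f ((x + s • v) + t • v)) (f' (x + s • v) v) 0 := by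
    rw [hasDerivAt_iff_tendsto_slope]
    convert hf (x + s • v) v using 2 with t
    simp [slope_def_module]
  convert (sub_self s ▸ at_zero).comp_sub_const s s using 2 with t
  congr 1
  module

theorem norm_sub_le (hf : HasGateauxDeriv f f') {M : ℝ} (hM : ∀ x, ‖f' x‖ ≤ M) (x y : E) :
    ‖f x - f y‖ ≤ M * ‖x - y‖ := by
  have segment := norm_image_sub_le_of_norm_deriv_le_segment_01'
    (f := fun t : ℝ => f (y + t • (x - y))) (C := M * ‖x - y‖)
    (fun t _ => (hf.hasDerivAt_add_smul y (x - y) t).hasDerivWithinAt)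
    (fun t _ => (f' _).le_of_opNorm_le (hM _) _)
  simpa using segment

end HasGateauxDeriv

namespace ContinuousLinearMap

variable {U V W : Type*} [NormedAddCommGroup U] [NormedSpace ℝ U]
  [NormedAddCommGroup V] [NormedSpace ℝ V] [NormedAddCommGroup W] [NormedSpace ℝ W]

theorem norm_apply_apply_le_of_le {C : W →L[ℝ] V} {B : U →L[ℝ] W} {x : U} {c b r : ℝ}
    (hC : ‖C‖ ≤ c) (hB : ‖B‖ ≤ b) (hx : ‖x‖ ≤ r) : ‖C (B x)‖ ≤ c * b * r := by
  have hc : 0 ≤ c := (norm_nonneg _).trans hC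
  have hb : 0 ≤ b := (norm_nonneg _).trans hB
  calc ‖C (B x)‖ ≤ ‖C‖ * (‖B‖ * ‖x‖) := le_opNorm_of_le C (le_opNorm B x)
    _ ≤ c * (b * r) := by gcongr
    _ = c * b * r := (mul_assoc _ _ _).symm

/-- Via the resolvent identity `C₁ - C₂ = C₁ (B₂ - B₁) C₂`. -/
theorem norm_inverse_sub_inverse_le {B₁ B₂ : V →L[ℝ] W} {C₁ C₂ : W →L[ℝ] V} {c₁ c₂ δ : ℝ}
    (hleft : ∀ v, C₁ (B₁ v) = v) (hright : ∀ w, B₂ (C₂ w) = w)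
    (hC₁ : ‖C₁‖ ≤ c₁) (hB : ‖B₁ - B₂‖ ≤ δ) (hC₂ : ‖C₂‖ ≤ c₂) :
    ‖C₁ - C₂‖ ≤ c₁ * δ * c₂ := by
  have hc₁ : 0 ≤ c₁ := (norm_nonneg _).trans hC₁
  have hδ : 0 ≤ δ := (norm_nonneg _).trans hB
  have hc₂ : 0 ≤ c₂ := (norm_nonneg _).trans hC₂
  refine opNorm_le_bound _ (by positivity) fun w => ?_
  have resolvent : (C₁ - C₂) w = C₁ ((B₂ - B₁) (C₂ w)) := by simp [hleft, hright]
  rw [resolvent, mul_assoc (c₁ * δ)]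
  exact norm_apply_apply_le_of_le hC₁ (norm_sub_rev B₂ B₁ ▸ hB) (le_of_opNorm_le _ hC₂ w)

theorem norm_apply_apply_sub_apply_apply_le {C₁ C₂ : W →L[ℝ] V} {B₁ B₂ : U →L[ℝ] W}
    {y₁ y₂ : U} {c b r δc δb δr : ℝ} (hC : ‖C₁ - C₂‖ ≤ δc) (hC₂ : ‖C₂‖ ≤ c) (hB₁ : ‖B₁‖ ≤ b)
    (hB₂ : ‖B₂‖ ≤ b) (hB : ‖B₁ - B₂‖ ≤ δb) (hy₁ : ‖y₁‖ ≤ r) (hy : ‖y₁ - y₂‖ ≤ δr) :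
    ‖C₁ (B₁ y₁) - C₂ (B₂ y₂)‖ ≤ δc * b * r + c * δb * r + c * b * δr := by
  have telescope : C₁ (B₁ y₁) - C₂ (B₂ y₂) =
      (C₁ - C₂) (B₁ y₁) + C₂ ((B₁ - B₂) y₁) + C₂ (B₂ (y₁ - y₂)) := by
    simp only [sub_apply, map_sub]
    abel
  rw [telescope]
  exact norm_add₃_le.trans (add_le_add_three (norm_apply_apply_le_of_le hC hB₁ hy₁)
    (norm_apply_apply_le_of_le hC₂ hB hy₁) (norm_apply_apply_le_of_le hC₂ hB₂ hy))

end ContinuousLinearMap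

open ContinuousLinearMap

theorem inverse_state_map_derivative_lipschitz_general
    (A : X → (K →L[ℝ] (K →L[ℝ] ℝ)))
    (A' : X → (X →L[ℝ] (K →L[ℝ] (K →L[ℝ] ℝ))))
    (hGateaux : ∀ ξ η : X,
      Tendsto (fun t : ℝ => t⁻¹ • (A (ξ + t • η) - A ξ)) (𝓝[≠] (0 : ℝ)) (𝓝 (A' ξ η)))
    (Ainv : X → ((K →L[ℝ] ℝ) →L[ℝ] K))
    (hinv_left : ∀ ζ : X, ∀ k : K, Ainv ζ (A ζ k) = k)
    (hinv_right : ∀ ζ : X, ∀ g : K →L[ℝ] ℝ, A ζ (Ainv ζ g) = g)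
    (α : ℝ) (hα : 0 < α) (hAinv_bdd : ∀ ζ : X, ‖Ainv ζ‖ ≤ 1 / α)
    (MA' : ℝ) (hA'_bdd : ∀ ζ : X, ‖A' ζ‖ ≤ MA')
    (LA : ℝ) (hA'_lip : ∀ ξ₁ ξ₂ : X, ‖A' ξ₁ - A' ξ₂‖ ≤ LA * ‖ξ₁ - ξ₂‖)
    (f : K →L[ℝ] ℝ)
    (R' : X → (X →L[ℝ] K))
    (hR' : ∀ ζ : X, ∀ η : X, R' ζ η = -(Ainv ζ ((A' ζ η) (Ainv ζ f)))) :
    ∀ ξ₁ ξ₂ : X,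
      ‖R' ξ₁ - R' ξ₂‖ ≤ ‖f‖ * (LA / α ^ 2 + 2 * MA' ^ 2 / α ^ 3) * ‖ξ₁ - ξ₂‖ := by
  intro ξ₁ ξ₂
  have hA : HasGateauxDeriv A A' := hGateaux
  have hAinv_lip : ‖Ainv ξ₁ - Ainv ξ₂‖ ≤ MA' / α ^ 2 * ‖ξ₁ - ξ₂‖ :=
    (norm_inverse_sub_inverse_le (hinv_left ξ₁) (hinv_right ξ₂) (hAinv_bdd ξ₁)
      (hA.norm_sub_le hA'_bdd ξ₁ ξ₂) (hAinv_bdd ξ₂)).trans_eq (by ring)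
  have hLA : 0 ≤ LA * ‖ξ₁ - ξ₂‖ := (norm_nonneg _).trans (hA'_lip ξ₁ ξ₂)
  have hbound_nonneg : 0 ≤ ‖f‖ * (LA / α ^ 2 + 2 * MA' ^ 2 / α ^ 3) * ‖ξ₁ - ξ₂‖ := by
    rw [mul_assoc, add_mul, div_mul_eq_mul_div]
    exact mul_nonneg (norm_nonneg f) (add_nonneg (div_nonneg hLA (by positivity)) (by positivity))
  refine opNorm_le_bound _ hbound_nonneg fun η => ?_
  have hB : ‖A' ξ₁ η - A' ξ₂ η‖ ≤ LA * ‖ξ₁ - ξ₂‖ * ‖η‖ := by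
    simpa only [sub_apply] using le_of_opNorm_le _ (hA'_lip ξ₁ ξ₂) η
  have hy : ‖Ainv ξ₁ f - Ainv ξ₂ f‖ ≤ MA' / α ^ 2 * ‖ξ₁ - ξ₂‖ * ‖f‖ := by
    simpa only [sub_apply] using le_of_opNorm_le _ hAinv_lip f
  rw [sub_apply, hR', hR', neg_sub_neg, norm_sub_rev]
  calc
    _ ≤ MA' / α ^ 2 * ‖ξ₁ - ξ₂‖ * (MA' * ‖η‖) * (1 / α * ‖f‖)
        + 1 / α * (LA * ‖ξ₁ - ξ₂‖ * ‖η‖) * (1 / α * ‖f‖)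
        + 1 / α * (MA' * ‖η‖) * (MA' / α ^ 2 * ‖ξ₁ - ξ₂‖ * ‖f‖) :=
      norm_apply_apply_sub_apply_apply_le hAinv_lip (hAinv_bdd ξ₂)
        (le_of_opNorm_le _ (hA'_bdd ξ₁) η) (le_of_opNorm_le _ (hA'_bdd ξ₂) η) hB
        (le_of_opNorm_le _ (hAinv_bdd ξ₁) f) hy
    _ = ‖f‖ * (LA / α ^ 2 + 2 * MA' ^ 2 / α ^ 3) * ‖ξ₁ - ξ₂‖ * ‖η‖ := by
      field_simp
      ring

/-- Lipschitz continuity of the derivative of the inverse state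
map: if `A : X → L(K,K*)` is Gâteaux differentiable with `‖A(ζ)⁻¹‖ ≤ 1/α`,
`‖A'(ζ)‖ ≤ M_{A'}` uniformly, and `A'` is `L_A`-Lipschitz, then
`R'(ζ)η := −A(ζ)⁻¹ (A'(ζ)η) A(ζ)⁻¹ f` defines a Lipschitz map `ζ ↦ R'(ζ)` from
`X` to `L(X,K)`, with constant `‖f‖(L_A/α² + 2M_{A'}²/α³)`. -/
theorem inverse_state_map_derivative_lipschitz
    [CompleteSpace K]
    (A : X → (K →L[ℝ] (K →L[ℝ] ℝ)))
    (A' : X → (X →L[ℝ] (K →L[ℝ] (K →L[ℝ] ℝ))))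
    (hGateaux : ∀ ξ η : X,
      Tendsto (fun t : ℝ => t⁻¹ • (A (ξ + t • η) - A ξ)) (𝓝[≠] (0 : ℝ)) (𝓝 (A' ξ η)))
    (Ainv : X → ((K →L[ℝ] ℝ) →L[ℝ] K))
    (hinv_left : ∀ ζ : X, ∀ k : K, Ainv ζ (A ζ k) = k)
    (hinv_right : ∀ ζ : X, ∀ g : K →L[ℝ] ℝ, A ζ (Ainv ζ g) = g)
    (α : ℝ) (hα : 0 < α) (hAinv_bdd : ∀ ζ : X, ‖Ainv ζ‖ ≤ 1 / α)
    (MA' : ℝ) (hA'_bdd : ∀ ζ : X, ‖A' ζ‖ ≤ MA')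
    (LA : ℝ) (hA'_lip : ∀ ξ₁ ξ₂ : X, ‖A' ξ₁ - A' ξ₂‖ ≤ LA * ‖ξ₁ - ξ₂‖)
    (f : K →L[ℝ] ℝ)
    (R' : X → (X →L[ℝ] K))
    (hR' : ∀ ζ : X, ∀ η : X, R' ζ η = -(Ainv ζ ((A' ζ η) (Ainv ζ f)))) :
    ∀ ξ₁ ξ₂ : X,
      ‖R' ξ₁ - R' ξ₂‖ ≤ ‖f‖ * (LA / α ^ 2 + 2 * MA' ^ 2 / α ^ 3) * ‖ξ₁ - ξ₂‖ :=
  inverse_state_map_derivative_lipschitz_general A A' hGateaux Ainv hinv_left hinv_right α hα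
    hAinv_bdd MA' hA'_bdd LA hA'_lip f R' hR'

end
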